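/- Let n ≥ 2, m ≥ 1, and for each α ∈ Fin m let A^α be a real symmetric n × n matrix. Set H² := (1/n²) ∑_α (trace A^α)² and s := ∑_α ∑_{i,j} (A^α i j)². Then s ≥ n H², and ∑_α [ (trace A^α)(A^α 0 0) − ∑_j (A^α 0 j)² ] ≥ ((n−1)/n) ( 2n H² − s − (n−2) √( n H² (s − n H²) / (n−1) ) ). -/

import Mathlib

/-! With `x_α = A^α₀₀ - tr A^α / n` and `b_α = ∑_{j ≠ 0} (A^α₀ⱼ)²`, each Ricci term equals
`(n-1)/n² (tr A^α)² + (n-2)/n · tr A^α · x_α - x_α² - b_α`. Keeping only the first row, the first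
column and the diagonal of `A^α`, and applying Cauchy–Schwarz to the other diagonal entries, gives
`n/(n-1) x_α² + 2 b_α ≤ ‖A^α‖² - (tr A^α)²/n`; summed over `α` this is `s - nH²` from below.
Cauchy–Schwarz over `α` then bounds `|∑ tr A^α · x_α|` by `(n-1) √(nH² (s - nH²)/(n-1))`,
and the inequality is a rearrangement. -/
open Finset

namespace Matrix

variable {ι : Type*} [Fintype ι] [DecidableEq ι]

lemma IsSymm.sq_add_two_mul_sum_sq_row_add_sum_sq_diag_le {M : Matrix ι ι ℝ} (hM : M.IsSymm)
    (k : ι) :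
    M k k ^ 2 + 2 * ∑ j ∈ univ.erase k, M k j ^ 2 + ∑ i ∈ univ.erase k, M i i ^ 2
      ≤ ∑ i, ∑ j, M i j ^ 2 := by
  have hrow : ∀ i ∈ univ.erase k, M i i ^ 2 + M k i ^ 2 ≤ ∑ j, M i j ^ 2 := by
    intro i hi
    rw [hM.apply i k]
    simpa [sum_pair (ne_of_mem_erase hi)] using
      sum_le_sum_of_subset_of_nonneg (subset_univ {i, k}) fun j _ _ => sq_nonneg (M i j)
  calc _ = ∑ j, M k j ^ 2 + ∑ i ∈ univ.erase k, (M i i ^ 2 + M k i ^ 2) := by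
        rw [← add_sum_erase _ _ (mem_univ k), sum_add_distrib]; ring
    _ ≤ ∑ j, M k j ^ 2 + ∑ i ∈ univ.erase k, ∑ j, M i j ^ 2 := by gcongr with i hi; exact hrow i hi
    _ = _ := add_sum_erase univ (fun i => ∑ j, M i j ^ 2) (mem_univ k)

lemma sq_trace_sub_diag_le (M : Matrix ι ι ℝ) (k : ι) :
    (M.trace - M k k) ^ 2 ≤ (Fintype.card ι - 1) * ∑ i ∈ univ.erase k, M i i ^ 2 := by
  have h := sq_sum_le_card_mul_sum_sq (s := univ.erase k) (f := fun i => M i i)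
  rwa [sum_erase_eq_sub (mem_univ k), card_erase_of_mem (mem_univ k), card_univ,
    Nat.cast_sub (Fintype.card_pos_iff.2 ⟨k⟩), Nat.cast_one] at h

lemma IsSymm.card_div_mul_sq_add_two_mul_sum_sq_row_le {M : Matrix ι ι ℝ} (hM : M.IsSymm) (k : ι)
    (hι : 2 ≤ Fintype.card ι) :
    Fintype.card ι / (Fintype.card ι - 1) * (M k k - M.trace / Fintype.card ι) ^ 2
        + 2 * ∑ j ∈ univ.erase k, M k j ^ 2
      ≤ ∑ i, ∑ j, M i j ^ 2 - M.trace ^ 2 / Fintype.card ι := by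
  set n : ℝ := (Fintype.card ι : ℝ)
  have hn : (2 : ℝ) ≤ n := by simp only [n]; exact_mod_cast hι
  have hdiag : (M.trace - M k k) ^ 2 / (n - 1) ≤ ∑ i ∈ univ.erase k, M i i ^ 2 := by
    rw [div_le_iff₀ (by linarith), mul_comm]; exact sq_trace_sub_diag_le M k
  have hsplit : M k k ^ 2 + (M.trace - M k k) ^ 2 / (n - 1)
      = M.trace ^ 2 / n + n / (n - 1) * (M k k - M.trace / n) ^ 2 := by
    field_simp [show n - 1 ≠ 0 by linarith]; ring
  linarith [hM.sq_add_two_mul_sum_sq_row_add_sum_sq_diag_le k]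

lemma trace_mul_sub_sum_sq_row_eq (M : Matrix ι ι ℝ) (k : ι) {c : ℝ} (hc : c ≠ 0) :
    M.trace * M k k - ∑ j, M k j ^ 2
      = (c - 1) / c * (M.trace ^ 2 / c) + (c - 2) / c * (M.trace * (M k k - M.trace / c))
        - (M k k - M.trace / c) ^ 2 - ∑ j ∈ univ.erase k, M k j ^ 2 := by
  rw [← add_sum_erase _ _ (mem_univ k)]
  field_simp; ring

end Matrix

lemma ricci_bound_of_moments {n K T X B s : ℝ} (hn : 2 ≤ n) (hK : 0 ≤ K) (hX : 0 ≤ X) (hB : 0 ≤ B)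
    (hT : T ^ 2 ≤ n * K * X) (hs : n / (n - 1) * X + 2 * B ≤ s - K) :
    K ≤ s ∧ (n - 1) / n * K + (n - 2) / n * T - X - B ≥
      (n - 1) / n * (2 * K - s - (n - 2) * √(K * (s - K) / (n - 1))) := by
  have hn1 : 0 < n - 1 := by linarith
  have hs' : n * X + 2 * (n - 1) * B ≤ (n - 1) * (s - K) := by
    rw [div_mul_eq_mul_div, ← le_sub_iff_add_le, div_le_iff₀ hn1] at hs; linarith
  have hKs : K ≤ s := by nlinarith
  refine ⟨hKs, ?_⟩
  set R := √(K * (s - K) / (n - 1))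
  have hR : ((n - 1) * R) ^ 2 = (n - 1) * (K * (s - K)) := by
    rw [mul_pow, Real.sq_sqrt (by have := sub_nonneg.2 hKs; positivity)]; field_simp
  have hTR : -((n - 1) * R) ≤ T := by
    refine (abs_le_of_sq_le_sq' ?_ (by positivity)).1
    rw [hR]; nlinarith [mul_le_mul_of_nonneg_left hs' hK, mul_nonneg (mul_nonneg hK hB) hn1.le]
  have hXB : n * (X + B) ≤ (n - 1) * (s - K) := by nlinarith
  have key : (n - 1) / n * K + (n - 2) / n * T - X - B
      - (n - 1) / n * (2 * K - s - (n - 2) * R)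
      = ((n - 2) * (T + (n - 1) * R) + ((n - 1) * (s - K) - n * (X + B))) / n := by
    field_simp; ring
  have hgap : 0 ≤ ((n - 2) * (T + (n - 1) * R) + ((n - 1) * (s - K) - n * (X + B))) / n := by
    apply div_nonneg _ (by linarith)
    nlinarith
  linarith

theorem stmt_13 (n m : ℕ) (hn : 2 ≤ n)
    (A : Fin m → Matrix (Fin n) (Fin n) ℝ) (hA : ∀ α, (A α).IsSymm)
    (H2 s : ℝ)
    (hH2 : H2 = (1 / (n : ℝ) ^ 2) * ∑ α, (Matrix.trace (A α)) ^ 2)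
    (hs : s = ∑ α, ∑ i, ∑ j, (A α i j) ^ 2) :
    s ≥ (n : ℝ) * H2 ∧
    ∑ α, (Matrix.trace (A α) * A α ⟨0, by omega⟩ ⟨0, by omega⟩
        - ∑ j, (A α ⟨0, by omega⟩ j) ^ 2)
      ≥ (((n : ℝ) - 1) / n) *
          (2 * n * H2 - s -
            ((n : ℝ) - 2) * Real.sqrt ((n : ℝ) * H2 * (s - (n : ℝ) * H2) / ((n : ℝ) - 1))) := by
  set k : Fin n := ⟨0, by omega⟩
  have hn' : (2 : ℝ) ≤ n := by exact_mod_cast hn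
  set t := fun α => (A α).trace
  set x := fun α => A α k k - t α / n
  set b := fun α => ∑ j ∈ univ.erase k, A α k j ^ 2
  have hK : (n : ℝ) * H2 = ∑ α, t α ^ 2 / n := by
    rw [hH2, ← sum_div]; field_simp; rfl
  have hmoment : ∀ α, n / (n - 1) * x α ^ 2 + 2 * b α ≤ ∑ i, ∑ j, A α i j ^ 2 - t α ^ 2 / n :=
    fun α => by simpa only [Fintype.card_fin] using
      (hA α).card_div_mul_sq_add_two_mul_sum_sq_row_le k (by simpa using hn)
  have hricci : ∀ α, t α * A α k k - ∑ j, A α k j ^ 2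
      = (n - 1) / n * (t α ^ 2 / n) + (n - 2) / n * (t α * x α) - x α ^ 2 - b α :=
    fun α => (A α).trace_mul_sub_sum_sq_row_eq k (by positivity)
  have hT : (∑ α, t α * x α) ^ 2 ≤ n * (n * H2) * ∑ α, x α ^ 2 := by
    rw [hK, ← sum_div, mul_div_cancel₀ _ (by positivity)]
    exact sum_mul_sq_le_sq_mul_sq _ _ _
  have hs' : n / (n - 1) * ∑ α, x α ^ 2 + 2 * ∑ α, b α ≤ s - n * H2 := by
    rw [hK, hs, mul_sum, mul_sum, ← sum_add_distrib, ← sum_sub_distrib]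
    exact sum_le_sum fun α _ => hmoment α
  obtain ⟨hsK, hric⟩ := ricci_bound_of_moments hn' (by rw [hK]; positivity)
    (by positivity) (sum_nonneg fun α _ => sum_nonneg fun j _ => sq_nonneg _) hT hs'
  refine ⟨hsK, ?_⟩
  rw [sum_congr rfl fun α _ => hricci α]
  simp only [sum_sub_distrib, sum_add_distrib, ← mul_sum, ← hK]
  convert hric using 3
  ring
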